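/- Let $(L,[\cdot,\cdot])$ be a Leibniz algebra with representation $(V;\rho^l,\rho^r)$. Define $R(x,y)u = \rho^r(y)\rho^r(x)u$, $M(x,y)u = \rho^r(y)\rho^l(x)u$, $L(x,y)u = \rho^l([x,y])u$. Then $(R,M,L)$ is a representation of the Leibniz triple system $(L,\{x,y,z\}=[[x,y],z])$ on $V$. -/

import Mathlib

def IsTrilin (K : Type*) [Field K] {L M : Type*} [AddCommGroup L] [Module K L]
    [AddCommGroup M] [Module K M] (t : L → L → L → M) : Prop :=
  (∀ y z, IsLinearMap K fun x => t x y z) ∧ (∀ x z, IsLinearMap K fun y => t x y z) ∧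
    (∀ x y, IsLinearMap K fun z => t x y z)

def LTSIdent {L : Type*} [AddCommGroup L] (t : L → L → L → L) : Prop :=
  (∀ a b c d e, t a b (t c d e) =
      t (t a b c) d e - t (t a b d) c e - t (t a b e) c d + t (t a b e) d c) ∧
  (∀ a b c d e, t a (t b c d) e =
      t (t a b c) d e - t (t a c b) d e - t (t a d b) c e + t (t a d c) b e)

def IsLTS (K : Type*) [Field K] {L : Type*} [AddCommGroup L] [Module K L]
    (t : L → L → L → L) : Prop := IsTrilin K t ∧ LTSIdent t

def sd {L V : Type*} [AddCommGroup L] [AddCommGroup V]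
    (t : L → L → L → L) (l m r : L → L → V → V) :
    L × V → L × V → L × V → L × V :=
  fun p q s => (t p.1 q.1 s.1, l p.1 q.1 s.2 + m p.1 s.1 q.2 + r q.1 s.1 p.2)

def IsRep (K : Type*) [Field K] {L V : Type*} [AddCommGroup L] [Module K L]
    [AddCommGroup V] [Module K V] (t : L → L → L → L) (l m r : L → L → V → V) : Prop :=
  IsLTS K (sd t l m r)

def IsRRB {K : Type*} [Field K] {L V : Type*} [AddCommGroup L] [Module K L]
    [AddCommGroup V] [Module K V] (t : L → L → L → L) (l m r : L → L → V → V)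
    (T : V →ₗ[K] L) : Prop :=
  ∀ u v w, t (T u) (T v) (T w) =
    T (l (T u) (T v) w + m (T u) (T w) v + r (T v) (T w) u)

def IsRB {K : Type*} [Field K] {L : Type*} [AddCommGroup L] [Module K L]
    (t : L → L → L → L) (R : L →ₗ[K] L) : Prop :=
  ∀ x y z, t (R x) (R y) (R z) =
    R (t (R x) (R y) z + t (R x) y (R z) + t x (R y) (R z))

def IsNij {K : Type*} [Field K] {A : Type*} [AddCommGroup A] [Module K A]
    (t : A → A → A → A) (N : A →ₗ[K] A) : Prop :=
  ∀ x y z, t (N x) (N y) (N z) =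
    N (t (N x) (N y) z) + N (t x (N y) (N z)) + N (t (N x) y (N z))
      - N (N (t (N x) y z)) - N (N (t x (N y) z)) - N (N (t x y (N z)))
      + N (N (N (t x y z)))

def IsLeib {K : Type*} [Field K] {L : Type*} [AddCommGroup L] [Module K L]
    (b : L →ₗ[K] L →ₗ[K] L) : Prop :=
  ∀ x y z, b x (b y z) = b (b x y) z - b (b x z) y

def IsLeibRep {K : Type*} [Field K] {L V : Type*} [AddCommGroup L] [Module K L]
    [AddCommGroup V] [Module K V] (b : L →ₗ[K] L →ₗ[K] L)
    (ρl ρr : L →ₗ[K] Module.End K V) : Prop :=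
  (∀ x y, ρl (b x y) = ρr y * ρl x - ρl x * ρr y) ∧
    (∀ x y, ρl (b x y) = ρl x * ρl y + ρr y * ρl x) ∧
    (∀ x y, ρr (b x y) = ρr y * ρr x - ρr x * ρr y)

/-!
The representation $V$ of the Leibniz algebra $L$ makes $L \oplus V$ a Leibniz algebra (the
semidirect product $[x+u, y+v] = [x,y] + \rho^l(x)v + \rho^r(y)u$), and the bracket
$\{a+u, b+v, c+w\}$ of the statement is exactly $[[a+u, b+v], c+w]$ there. So it suffices to know
that $[[x,y],z]$ is a Leibniz triple system on any Leibniz algebra, which follows by expanding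
both identities with the Leibniz rule.
-/

section

variable {K : Type*} [Field K] {L V : Type*} [AddCommGroup L] [Module K L]
  [AddCommGroup V] [Module K V]

theorem isTrilin_bracket_bracket (b : L →ₗ[K] L →ₗ[K] L) :
    IsTrilin K fun x y z => b (b x y) z :=
  ⟨fun y z => ((b.flip z).comp (b.flip y)).isLinear,
    fun x z => ((b.flip z).comp (b x)).isLinear,
    fun x y => (b (b x y)).isLinear⟩

theorem IsLeib.ltsIdent {b : L →ₗ[K] L →ₗ[K] L} (hb : IsLeib b) :
    LTSIdent fun x y z => b (b x y) z := by
  refine ⟨fun a a' c d e => ?_, fun a a' c d e => ?_⟩ <;> beta_reduce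
  · set u := b a a'
    rw [hb u (b c d) e, hb u c d, hb (b u e) c d]
    simp only [map_sub, LinearMap.sub_apply]
    abel
  · rw [hb a (b a' c) d, hb a a' c, hb (b a d) a' c]
    simp only [map_sub, LinearMap.sub_apply]
    abel

theorem IsLeib.isLTS {b : L →ₗ[K] L →ₗ[K] L} (hb : IsLeib b) :
    IsLTS K fun x y z => b (b x y) z :=
  ⟨isTrilin_bracket_bracket b, hb.ltsIdent⟩

def leibSemidirect (b : L →ₗ[K] L →ₗ[K] L) (ρl ρr : L →ₗ[K] Module.End K V) :
    L × V →ₗ[K] L × V →ₗ[K] L × V :=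
  LinearMap.mk₂ K (fun p q => (b p.1 q.1, ρl p.1 q.2 + ρr q.1 p.2))
    (fun p p' q => by ext <;> simp only [Prod.fst_add, Prod.snd_add, map_add,
      LinearMap.add_apply]; abel)
    (fun c p q => by ext <;> simp [smul_add])
    (fun p q q' => by ext <;> simp only [Prod.fst_add, Prod.snd_add, map_add,
      LinearMap.add_apply]; abel)
    (fun c p q => by ext <;> simp [smul_add])

@[simp]
theorem leibSemidirect_apply (b : L →ₗ[K] L →ₗ[K] L) (ρl ρr : L →ₗ[K] Module.End K V)
    (p q : L × V) : leibSemidirect b ρl ρr p q = (b p.1 q.1, ρl p.1 q.2 + ρr q.1 p.2) :=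
  rfl

theorem isLeib_leibSemidirect {b : L →ₗ[K] L →ₗ[K] L} (hb : IsLeib b)
    {ρl ρr : L →ₗ[K] Module.End K V} (hrep : IsLeibRep b ρl ρr) :
    IsLeib (leibSemidirect b ρl ρr) := by
  obtain ⟨h₁, h₂, h₃⟩ := hrep
  intro x y z
  ext
  · simpa using hb x.1 y.1 z.1
  · simp only [leibSemidirect_apply, Prod.snd_sub, map_add, h₂ x.1 y.1, h₁ x.1 z.1, h₃,
      LinearMap.sub_apply, LinearMap.add_apply, Module.End.mul_apply]
    abel

theorem sd_eq_leibSemidirect_bracket_bracket (b : L →ₗ[K] L →ₗ[K] L)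
    (ρl ρr : L →ₗ[K] Module.End K V) :
    sd (fun x y z => b (b x y) z) (fun x y w => ρl (b x y) w)
        (fun x z v => ρr z (ρl x v)) (fun y z u => ρr z (ρr y u)) =
      fun p q s => leibSemidirect b ρl ρr (leibSemidirect b ρl ρr p q) s := by
  funext p q s
  ext
  · rfl
  · simp only [sd, leibSemidirect_apply, map_add]
    abel

end

theorem stmt15 {K : Type*} [Field K] {L V : Type*} [AddCommGroup L] [Module K L]
    [AddCommGroup V] [Module K V]
    (b : L →ₗ[K] L →ₗ[K] L) (hb : IsLeib b)
    (ρl ρr : L →ₗ[K] Module.End K V) (hrep : IsLeibRep b ρl ρr) :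
    IsRep K (fun x y z => b (b x y) z)
      (fun x y w => ρl (b x y) w)
      (fun x z v => ρr z (ρl x v))
      (fun y z u => ρr z (ρr y u)) := by
  rw [IsRep, sd_eq_leibSemidirect_bracket_bracket]
  exact (isLeib_leibSemidirect hb hrep).isLTS
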